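/- Fix $n$ and $0 < r < 1$ with $k = \lfloor rn \rfloor \geq 1$, and write $n = pk + q$ with $0 \leq q < k$. Let $M = p\binom{k}{2} + \binom{q}{2}$. Then for every $0 \leq m \leq \binom{n}{2}$: $\min_{G \in G(n,m)} CO_e^r(G) = 0$ if $m \leq M$, and $\min_{G \in G(n,m)} CO_e^r(G) = m - M$ if $m > M$. -/

import Mathlib

/-!
A graph all of whose components have order at most `k` has at most `∑ C(cᵢ, 2)` edges, where the
component orders `cᵢ ≤ k` sum to `n`. Since `c ↦ C(c, 2)` is convex, this sum is largest when the
parts are filled greedily: `n / k` parts of order `k` and one of order `n % k`, giving `M` edges,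
and the disjoint union of cliques on these blocks attains `M`. So an `m`-edge graph loses at least
`m - M` edges before reaching a failure state, and a graph squeezed between the block graph and
`K_n` (or contained in the block graph when `m ≤ M`) needs no more.
-/

open SimpleGraph

/-- A graph is in a *failure state* for threshold `k` if every connected
component has order at most `k`. -/
def failureState {V : Type*} (G : SimpleGraph V) (k : ℕ) : Prop :=
  ∀ v : V, (G.connectedComponentMk v).supp.ncard ≤ k

/-- `S` is a vertex disconnecting set: removing the vertices of `S` from `G`
leaves every component with at most `k` vertices. -/
def vertexDisconnects {V : Type*} (G : SimpleGraph V) (k : ℕ) (S : Set V) : Prop :=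
  failureState (G.induce Sᶜ) k

/-- Component order proportion vertex connectivity: minimum size of a vertex
disconnecting set. -/
noncomputable def COv {V : Type*} (G : SimpleGraph V) (k : ℕ) : ℕ :=
  sInf {c | ∃ S : Set V, S.ncard = c ∧ vertexDisconnects G k S}

/-- Component order proportion edge connectivity: minimum size of an edge
disconnecting set. -/
noncomputable def COe {V : Type*} (G : SimpleGraph V) (k : ℕ) : ℕ :=
  sInf {c | ∃ E' : Set (Sym2 V), E' ⊆ G.edgeSet ∧ E'.ncard = c ∧
    failureState (G.deleteEdges E') k}

/-- Minimum of `COv` over all graphs with `n` vertices and `m` edges. -/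
noncomputable def gminV (n k m : ℕ) : ℕ :=
  sInf {c | ∃ G : SimpleGraph (Fin n), G.edgeSet.ncard = m ∧ COv G k = c}

/-- Minimum of `COe` over all graphs with `n` vertices and `m` edges. -/
noncomputable def gminE (n k m : ℕ) : ℕ :=
  sInf {c | ∃ G : SimpleGraph (Fin n), G.edgeSet.ncard = m ∧ COe G k = c}

open Finset

lemma choose_two_add (a b : ℕ) : (a + b).choose 2 = a.choose 2 + b.choose 2 + a * b := by
  induction b with
  | zero => simp
  | succ b ih =>
    rw [← add_assoc, Nat.choose_succ_succ', Nat.choose_succ_succ', ih]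
    simp only [Nat.choose_one_right]
    ring

/-- `maxEdges k n` is the paper's `M`: the edge count of `n / k` disjoint `k`-cliques together with
a clique on the remaining `n % k` vertices. -/
def maxEdges (k n : ℕ) : ℕ := n / k * k.choose 2 + (n % k).choose 2

lemma maxEdges_mul_add {k b : ℕ} (a : ℕ) (hb : b < k) :
    maxEdges k (k * a + b) = a * k.choose 2 + b.choose 2 := by
  have hk : 0 < k := by omega
  rw [maxEdges, Nat.mul_add_div hk, Nat.mul_add_mod, Nat.div_eq_of_lt hb, Nat.mod_eq_of_lt hb,
    add_zero]

lemma choose_two_add_maxEdges_le {k c : ℕ} (hk : 0 < k) (hc : c ≤ k) (n : ℕ) :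
    c.choose 2 + maxEdges k n ≤ maxEdges k (c + n) := by
  obtain ⟨a, b, hb, rfl⟩ : ∃ a b, b < k ∧ n = k * a + b :=
    ⟨n / k, n % k, Nat.mod_lt _ hk, (Nat.div_add_mod n k).symm⟩
  have hcb := choose_two_add c b
  rw [maxEdges_mul_add a hb]
  rcases lt_or_ge (c + b) k with hlt | hge
  · rw [show c + (k * a + b) = k * a + (c + b) by ring, maxEdges_mul_add a hlt]
    omega
  · obtain ⟨d, hd⟩ := Nat.exists_eq_add_of_le hge
    rw [show c + (k * a + b) = k * (a + 1) + d by rw [mul_add, mul_one, add_assoc, ← hd]; ring,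
      maxEdges_mul_add (a + 1) (by omega)]
    have hkd := choose_two_add k d
    -- the overflow `d` starts a new block; `k * d ≤ c * b` as `c, b ≥ d` and `c + b = k + d`
    have hmul : k * d ≤ c * b := by
      obtain ⟨x, rfl⟩ := Nat.exists_eq_add_of_le (show d ≤ c by omega)
      obtain ⟨y, rfl⟩ := Nat.exists_eq_add_of_le (show d ≤ b by omega)
      obtain rfl : k = d + x + y := by omega
      nlinarith
    rw [hd] at hcb
    nlinarith

lemma sum_choose_two_le_maxEdges {k : ℕ} (hk : 0 < k) {ι : Type*} (s : Finset ι) (f : ι → ℕ)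
    (hf : ∀ i ∈ s, f i ≤ k) : ∑ i ∈ s, (f i).choose 2 ≤ maxEdges k (∑ i ∈ s, f i) := by
  classical
  induction s using Finset.induction_on with
  | empty => simp [maxEdges]
  | insert i s hi ih =>
    rw [sum_insert hi, sum_insert hi]
    calc (f i).choose 2 + ∑ j ∈ s, (f j).choose 2
        ≤ (f i).choose 2 + maxEdges k (∑ j ∈ s, f j) :=
          Nat.add_le_add_left (ih fun j hj => hf j (mem_insert_of_mem hj)) _
      _ ≤ maxEdges k (f i + ∑ j ∈ s, f j) :=
          choose_two_add_maxEdges_le hk (hf i (mem_insert_self i s)) _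

namespace SimpleGraph

variable {V β : Type*} {k : ℕ}

def fiberCliques (g : V → β) : SimpleGraph V where
  Adj u v := u ≠ v ∧ g u = g v

@[simp]
lemma fiberCliques_adj {g : V → β} {u v : V} : (fiberCliques g).Adj u v ↔ u ≠ v ∧ g u = g v :=
  Iff.rfl

lemma le_fiberCliques_connectedComponentMk (G : SimpleGraph V) :
    G ≤ fiberCliques G.connectedComponentMk :=
  fun _ _ h => ⟨h.ne, ConnectedComponent.sound h.reachable⟩

lemma Reachable.fiberCliques_eq {g : V → β} {u v : V} (h : (fiberCliques g).Reachable u v) :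
    g u = g v := by
  obtain ⟨w⟩ := h
  induction w with
  | nil => rfl
  | cons hadj _ ih => exact hadj.2.trans ih

lemma failureState_fiberCliques [Finite V] {g : V → β}
    (hg : ∀ b, {v | g v = b}.ncard ≤ k) : failureState (fiberCliques g) k := by
  intro v
  refine le_trans (Set.ncard_le_ncard (fun u hu => ?_) (Set.toFinite _)) (hg (g v))
  rw [ConnectedComponent.mem_supp_iff, ConnectedComponent.eq] at hu
  exact hu.fiberCliques_eq

lemma card_edgeFinset_fiberCliques [Fintype V] [DecidableEq V] [DecidableEq β] (g : V → β)
    [DecidableRel (fiberCliques g).Adj] (t : Finset β) (hg : ∀ v, g v ∈ t) :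
    #(fiberCliques g).edgeFinset = ∑ b ∈ t, (#{v | g v = b}).choose 2 := by
  have hdeg : ∀ v, (fiberCliques g).degree v = #{u | g u = g v} - 1 := by
    intro v
    rw [← card_neighborFinset_eq_degree,
      ← card_erase_of_mem (s := {u | g u = g v}) (a := v) (by simp)]
    congr 1
    ext u
    simp only [mem_neighborFinset, fiberCliques_adj, mem_erase, mem_filter, mem_univ, true_and]
    exact and_congr ne_comm eq_comm
  rw [← Nat.mul_right_inj two_ne_zero, ← sum_degrees_eq_twice_card_edges, mul_sum,
    ← sum_fiberwise_of_maps_to (fun v _ => hg v)]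
  refine sum_congr rfl fun b _ => ?_
  rw [Nat.choose_two_right, Nat.mul_div_cancel' (Nat.even_mul_pred_self _).two_dvd,
    sum_congr rfl fun v hv => by rw [hdeg, (mem_filter.1 hv).2], sum_const, smul_eq_mul]

lemma failureState.anti [Finite V] {G H : SimpleGraph V} (hH : failureState H k) (h : G ≤ H) :
    failureState G k := by
  intro v
  refine le_trans (Set.ncard_le_ncard (fun u hu => ?_) (Set.toFinite _)) (hH v)
  rw [ConnectedComponent.mem_supp_iff, ConnectedComponent.eq] at hu ⊢
  exact hu.mono h

lemma failureState_bot (hk : 0 < k) : failureState (⊥ : SimpleGraph V) k := by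
  intro v
  have : ((⊥ : SimpleGraph V).connectedComponentMk v).supp = {v} := by
    ext u
    simp [ConnectedComponent.mem_supp_iff, reachable_bot]
  rwa [this, Set.ncard_singleton]

lemma ncard_edgeSet_le_maxEdges [Fintype V] {G : SimpleGraph V} (hk : 0 < k)
    (hG : failureState G k) : G.edgeSet.ncard ≤ maxEdges k (Fintype.card V) := by
  classical
  have hcomp : ∀ c : G.ConnectedComponent, #{v | G.connectedComponentMk v = c} ≤ k := by
    refine ConnectedComponent.ind fun v => ?_
    convert hG v
    rw [← Set.ncard_coe_finset]
    congr
    ext u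
    simp [ConnectedComponent.mem_supp_iff]
  rw [← coe_edgeFinset, Set.ncard_coe_finset]
  calc #G.edgeFinset ≤ #(fiberCliques G.connectedComponentMk).edgeFinset :=
        card_le_card (edgeFinset_mono (le_fiberCliques_connectedComponentMk G))
    _ = ∑ c, (#{v | G.connectedComponentMk v = c}).choose 2 :=
        card_edgeFinset_fiberCliques _ univ fun _ => mem_univ _
    _ ≤ maxEdges k (∑ c, #{v | G.connectedComponentMk v = c}) :=
        sum_choose_two_le_maxEdges hk _ _ fun c _ => hcomp c
    _ = maxEdges k (Fintype.card V) := by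
        rw [← card_univ, card_eq_sum_card_fiberwise fun v _ => mem_univ (G.connectedComponentMk v)]

lemma sub_maxEdges_le_COe [Fintype V] (hk : 0 < k) (G : SimpleGraph V) :
    G.edgeSet.ncard - maxEdges k (Fintype.card V) ≤ COe G k := by
  obtain ⟨E', hE', hcard, hfail⟩ : COe G k ∈ {c | ∃ E' : Set (Sym2 V), E' ⊆ G.edgeSet ∧
      E'.ncard = c ∧ failureState (G.deleteEdges E') k} := by
    refine Nat.sInf_mem ⟨_, G.edgeSet, subset_rfl, rfl, ?_⟩
    rw [deleteEdges_edgeSet, sdiff_self]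
    exact failureState_bot hk
  have := ncard_edgeSet_le_maxEdges hk hfail
  rw [edgeSet_deleteEdges, Set.ncard_sdiff hE'] at this
  omega

lemma COe_le_ncard_edgeSet_diff [Finite V] {B : SimpleGraph V} (hB : failureState B k)
    (G : SimpleGraph V) : COe G k ≤ (G.edgeSet \ B.edgeSet).ncard :=
  Nat.sInf_le ⟨_, Set.sdiff_subset, rfl, hB.anti fun u v h => by simp_all⟩

lemma exists_ncard_edgeSet_eq_of_le {H₁ H₂ : SimpleGraph V} (h : H₁ ≤ H₂) {m : ℕ}
    (h₁ : H₁.edgeSet.ncard ≤ m) (h₂ : m ≤ H₂.edgeSet.ncard) :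
    ∃ G, H₁ ≤ G ∧ G ≤ H₂ ∧ G.edgeSet.ncard = m := by
  obtain ⟨s, h₁s, hs₂, hs⟩ := Set.exists_subsuperset_card_eq (edgeSet_mono h) h₁ h₂
  have hG : (fromEdgeSet s).edgeSet = s := by
    rw [edgeSet_fromEdgeSet, sdiff_eq_left]
    exact Set.disjoint_left.2 fun e he => not_isDiag_of_mem_edgeSet _ (hs₂ he)
  refine ⟨fromEdgeSet s, ?_, ?_, by rw [hG, hs]⟩
  · rw [← edgeSet_subset_edgeSet, hG]; exact h₁s
  · rw [← edgeSet_subset_edgeSet, hG]; exact hs₂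

end SimpleGraph

lemma card_filter_div_eq {n k : ℕ} (hk : 0 < k) (b : ℕ) :
    #{v : Fin n | (v : ℕ) / k = b} = min n (b * k + k) - b * k := by
  rw [← card_map Fin.valEmbedding, ← Nat.card_Ico]
  congr 1
  ext x
  simp only [mem_map, mem_filter, mem_univ, true_and, Nat.div_eq_iff hk,
    Fin.valEmbedding_apply, Finset.mem_Ico]
  constructor
  · rintro ⟨a, ha, rfl⟩
    omega
  · intro hx
    exact ⟨⟨x, by omega⟩, by dsimp only; omega, rfl⟩

lemma exists_failureState_ncard_edgeSet_eq_maxEdges {k : ℕ} (hk : 0 < k) (n : ℕ) :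
    ∃ B : SimpleGraph (Fin n), failureState B k ∧ B.edgeSet.ncard = maxEdges k n := by
  classical
  refine ⟨fiberCliques fun v : Fin n => (v : ℕ) / k, failureState_fiberCliques fun b => ?_, ?_⟩
  · rw [Set.ncard_eq_toFinset_card', Set.toFinset_ofPred, card_filter_div_eq hk]
    omega
  · have hdiv := Nat.div_add_mod' n k
    have hmod := Nat.mod_lt n hk
    have hblock : ∀ b ∈ range (n / k), #{v : Fin n | (v : ℕ) / k = b} = k := by
      intro b hb
      have := (Nat.le_div_iff_mul_le hk).1 (mem_range.1 hb)
      rw [Nat.succ_mul] at this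
      rw [card_filter_div_eq hk]
      omega
    rw [← coe_edgeFinset, Set.ncard_coe_finset, card_edgeFinset_fiberCliques _ (range (n / k + 1))
      fun v => mem_range.2 (Nat.lt_succ_of_le (Nat.div_le_div_right v.isLt.le)),
      sum_range_succ, sum_congr rfl fun b hb => by rw [hblock b hb], sum_const, card_range,
      card_filter_div_eq hk, smul_eq_mul, maxEdges]
    congr 2
    omega

theorem gminE_eq_sub_maxEdges {n k m : ℕ} (hk : 0 < k) (hm : m ≤ n.choose 2) :
    gminE n k m = m - maxEdges k n := by
  classical
  obtain ⟨B, hB, hBcard⟩ := exists_failureState_ncard_edgeSet_eq_maxEdges hk n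
  obtain ⟨G, hGm, hG⟩ : ∃ G : SimpleGraph (Fin n),
      G.edgeSet.ncard = m ∧ COe G k ≤ m - maxEdges k n := by
    have hGB := COe_le_ncard_edgeSet_diff hB
    rcases le_total m (maxEdges k n) with h | h
    · obtain ⟨G, -, hle, hGm⟩ :=
        exists_ncard_edgeSet_eq_of_le (bot_le (a := B)) (by simp) (hBcard ▸ h)
      refine ⟨G, hGm, ?_⟩
      simpa [Set.sdiff_eq_empty.2 (edgeSet_mono hle), Nat.sub_eq_zero_of_le h] using hGB G
    · have htop : (⊤ : SimpleGraph (Fin n)).edgeSet.ncard = n.choose 2 := by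
        rw [← coe_edgeFinset, Set.ncard_coe_finset, card_edgeFinset_top_eq_card_choose_two,
          Fintype.card_fin]
      obtain ⟨G, hle, -, hGm⟩ := exists_ncard_edgeSet_eq_of_le le_top (hBcard ▸ h) (htop ▸ hm)
      refine ⟨G, hGm, ?_⟩
      simpa [Set.ncard_sdiff (edgeSet_mono hle), hGm, hBcard] using hGB G
  rw [gminE]
  refine le_antisymm (le_trans (Nat.sInf_le ⟨G, hGm, rfl⟩) hG) ?_
  refine le_csInf ⟨_, G, hGm, rfl⟩ fun c ⟨G', hG'm, hc⟩ => ?_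
  simpa [hG'm, hc] using sub_maxEdges_le_COe hk G'

theorem gminE_formula_general (n p q : ℕ) (k : ℕ) (hk1 : 1 ≤ k) (hn : n = p * k + q) (hq : q < k) :
    ∀ m ≤ n.choose 2,
      (m ≤ p * k.choose 2 + q.choose 2 → gminE n k m = 0) ∧
      (p * k.choose 2 + q.choose 2 < m →
        gminE n k m = m - (p * k.choose 2 + q.choose 2)) := by
  have hM : maxEdges k n = p * k.choose 2 + q.choose 2 := by
    rw [hn, mul_comm p k]
    exact maxEdges_mul_add p hq
  intro m hm
  rw [gminE_eq_sub_maxEdges hk1 hm, hM]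
  exact ⟨Nat.sub_eq_zero_of_le, fun _ => rfl⟩

theorem gminE_formula (n p q : ℕ) (r : ℝ) (hr0 : 0 < r) (hr1 : r < 1)
    (k : ℕ) (hk : k = ⌊r * n⌋₊) (hk1 : 1 ≤ k) (hn : n = p * k + q) (hq : q < k) :
    ∀ m ≤ n.choose 2,
      (m ≤ p * k.choose 2 + q.choose 2 → gminE n k m = 0) ∧
      (p * k.choose 2 + q.choose 2 < m →
        gminE n k m = m - (p * k.choose 2 + q.choose 2)) :=
  gminE_formula_general n p q k hk1 hn hq
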